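/- arXiv:1806.02119 — 2 statements merged into one kernel-verified Lean document; each statement's English description precedes it below -/
import Mathlib

section
/- Let q ≥ 2, let x ∈ {1,...,q−1}, y ∈ {x−1,...,q−2}, set s = y − (x−1) and suppose s is even. Let λ = (q−x+1, q−y, 2^{x−1}, 1^{s}) and ν = (q−y+s/2−1, 1^{y−s/2+1}). Then the Littlewood–Richardson coefficient c^λ_{ν,ν} is positive. -/
namespace PaperNote

/-- `l` is a partition of `n`: a weakly decreasing list of positive integers summing to `n`. -/
def IsPartition (l : List ℕ) (n : ℕ) : Prop :=
  l.Pairwise (· ≥ ·) ∧ (∀ a ∈ l, 0 < a) ∧ l.sum = n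

/-- The `j`-th part (0-indexed) of the conjugate partition. -/
def conj (l : List ℕ) (j : ℕ) : ℕ := l.countP (fun a => decide (j < a))

/-- The cells (0-indexed) of the Young diagram of `l`. -/
def cells (l : List ℕ) : Finset (ℕ × ℕ) :=
  (Finset.range l.length ×ˢ Finset.range (l.getD 0 0)).filter (fun p => p.2 < l.getD p.1 0)

/-- The hook length `h_{i,j}(λ) = λ_i + λ'_j − i − j − 1` (0-indexed `i`, `j`). -/
def hook (l : List ℕ) (i j : ℕ) : ℕ :=
  (l.getD i 0 - j) + (conj l j - i) - 1

/-- The degree of the irreducible character `χ^λ` of `S_n`, by the hook length formula. -/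
def charDegree (l : List ℕ) : ℕ :=
  Nat.factorial l.sum / ∏ p ∈ cells l, hook l p.1 p.2

/-- The set `H_e(λ)` of cells whose hook length is divisible by `e`. -/
def hookCells (l : List ℕ) (e : ℕ) : Finset (ℕ × ℕ) :=
  (cells l).filter (fun p => e ∣ hook l p.1 p.2)

/-- `l` is a hook partition of `n`, i.e. of the form `(n − x, 1^x)`. -/
def IsHookPartition (l : List ℕ) (n : ℕ) : Prop :=
  ∃ x, x ≤ n - 1 ∧ l = (n - x) :: List.replicate x 1

/-- The cells of the skew diagram `[λ ∖ μ]`. -/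
def skewCells (lam mu : List ℕ) : Finset (ℕ × ℕ) :=
  (cells lam).filter (fun p => mu.getD p.1 0 ≤ p.2)

/-- `q` comes weakly before `p` in the reading order (right to left, top to bottom). -/
def readsBefore (q p : ℕ × ℕ) : Prop :=
  q.1 < p.1 ∨ (q.1 = p.1 ∧ p.2 ≤ q.2)

instance : DecidableRel readsBefore := fun q p => by unfold readsBefore; infer_instance

/-- `T` is a Littlewood–Richardson configuration of type `ν` for the skew diagram
`[λ ∖ μ]`: entries are positive, weakly increasing along rows, strictly increasing down
columns, the number of entries equal to `v+1` is `ν_v`, and the word obtained by reading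
the entries right to left, top to bottom is a reverse lattice sequence. -/
def IsLRTableau (lam mu nu : List ℕ) (T : ℕ × ℕ → ℕ) : Prop :=
  (∀ p ∈ skewCells lam mu, 1 ≤ T p) ∧
  (∀ i j j', (i, j) ∈ skewCells lam mu → (i, j') ∈ skewCells lam mu → j ≤ j' →
      T (i, j) ≤ T (i, j')) ∧
  (∀ i i' j, (i, j) ∈ skewCells lam mu → (i', j) ∈ skewCells lam mu → i < i' →
      T (i, j) < T (i', j)) ∧
  (∀ v : ℕ, ((skewCells lam mu).filter (fun p => T p = v + 1)).card = nu.getD v 0) ∧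
  (∀ p ∈ skewCells lam mu, ∀ v : ℕ,
    ((skewCells lam mu).filter (fun q => readsBefore q p ∧ T q = v + 2)).card ≤
    ((skewCells lam mu).filter (fun q => readsBefore q p ∧ T q = v + 1)).card)

/-- The partition `Δ²(λ)`: writing the odd parts of `λ` as `2kᵢ+1` and the even parts as
`2rⱼ`, it is obtained by sorting decreasingly the multiset consisting of `kᵢ+1` for the
larger half of the `kᵢ`, the remaining `kᵢ`, and the `rⱼ` (discarding zero parts). -/
def deltaSq (lam : List ℕ) : List ℕ :=
  let ks := (lam.filter (fun a => decide (a % 2 = 1))).map (fun a => a / 2)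
  let rs := (lam.filter (fun a => decide (a % 2 = 0))).map (fun a => a / 2)
  ((((ks.take (ks.length / 2)).map (· + 1)) ++ ks.drop (ks.length / 2) ++ rs).insertionSort
      (· ≥ ·)).filter (fun a => decide (0 < a))

/-- The set of beta-numbers (first-column hook lengths) of the partition `l`. -/
def betaSet (l : List ℕ) : Finset ℕ :=
  (Finset.range l.length).image (fun i => l.getD i 0 + (l.length - 1 - i))

/-- The Murnaghan–Nakayama recursion, computed on beta-sets: `MN μ B` is the value of the
irreducible character of the symmetric group labelled by the partition with beta-set `B`
at an element of full cycle type `μ`.  Each step removes a rim hook of length `c`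
(the head of the cycle type), which on beta-sets replaces `b ∈ B` by `b − c ∉ B`, with sign
`(−1)^(leg length)`, the leg length being the number of elements of `B` strictly between
`b − c` and `b`. -/
def MN : List ℕ → Finset ℕ → ℤ
  | [], _ => 1
  | c :: rest, B =>
    ∑ b ∈ B.filter (fun b => c ≤ b ∧ (b - c) ∉ B),
      (-1 : ℤ) ^ ((B.filter (fun a => b - c < a ∧ a < b)).card) *
        MN rest (insert (b - c) (B.erase b))

end PaperNote

/-!
Put `b = q − y − 2`, `h = s / 2` and `t = x − 1`, so that `λ = (b+2h+2, b+2, 2^t, 1^{2h})`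
and `ν = (b+h+1, 1^{t+h+1})`.  The skew diagram `λ/ν` consists of the last `h+1` cells of
row 0, the cells `1, …, b+1` of row 1, the cells of column 1 in rows `2, …, t+1`, and the
cells of column 0 in rows `t+h+2, …, t+2h+1`.  Fill rows 0 and 1 with `1`s, except for the
last cell of row 1, which gets `2`; then number the column-1 strip `3, …, t+2` and the
column-0 strip `t+3, …, t+h+2` from top to bottom.  There are `b+h+1` ones and every value
`k ≥ 2` occurs exactly once, in a strictly lower row than `k − 1`, so the reading word is a
lattice word.
-/

namespace PaperNote

theorem readsBefore_of_fst_lt_of_readsBefore {c q p : ℕ × ℕ} (hc : c.1 < q.1)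
    (hq : readsBefore q p) : readsBefore c p := by
  unfold readsBefore at hq ⊢
  omega

theorem lattice_of_card_le_one_of_exists_earlier {S : Finset (ℕ × ℕ)} {T : ℕ × ℕ → ℕ}
    (hcard : ∀ v, (S.filter (fun q => T q = v + 2)).card ≤ 1)
    (hearlier : ∀ p ∈ S, ∀ v, T p = v + 2 → ∃ c ∈ S, T c = v + 1 ∧ c.1 < p.1)
    (p : ℕ × ℕ) (v : ℕ) :
    (S.filter (fun q => readsBefore q p ∧ T q = v + 2)).card ≤
      (S.filter (fun q => readsBefore q p ∧ T q = v + 1)).card := by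
  obtain hempty | ⟨q, hq⟩ :=
    (S.filter (fun q => readsBefore q p ∧ T q = v + 2)).eq_empty_or_nonempty
  · simp [hempty]
  obtain ⟨hqS, hqp, hqT⟩ := Finset.mem_filter.mp hq
  obtain ⟨c, hcS, hcT, hcq⟩ := hearlier q hqS v hqT
  calc (S.filter (fun q => readsBefore q p ∧ T q = v + 2)).card
      ≤ (S.filter (fun q => T q = v + 2)).card :=
        Finset.card_le_card (Finset.monotone_filter_right S fun _ _ h => h.2)
    _ ≤ 1 := hcard v
    _ ≤ (S.filter (fun q => readsBefore q p ∧ T q = v + 1)).card :=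
        Finset.one_le_card.mpr ⟨c, Finset.mem_filter.mpr
          ⟨hcS, readsBefore_of_fst_lt_of_readsBefore hcq hqp, hcT⟩⟩

namespace EvenCase

variable (b h t : ℕ)

def lam : List ℕ := [b + 2 * h + 2, b + 2] ++ List.replicate t 2 ++ List.replicate (2 * h) 1

def nu : List ℕ := (b + h + 1) :: List.replicate (t + h + 1) 1

def tableau (p : ℕ × ℕ) : ℕ :=
  if p.1 = 0 then 1 else if p.1 = 1 then (if p.2 = b + 1 then 2 else 1)
  else if p.1 ≤ t + 1 then p.1 + 1 else p.1 + 1 - h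

def cellOf (k : ℕ) : ℕ × ℕ :=
  if k = 2 then (1, b + 1) else if k ≤ t + 2 then (k - 1, 1) else (k + h - 1, 0)

theorem getD_lam (i : ℕ) :
    (lam b h t).getD i 0 =
      if i = 0 then b + 2 * h + 2 else if i = 1 then b + 2 else if i ≤ t + 1 then 2
      else if i ≤ t + 2 * h + 1 then 1 else 0 := by
  rcases i with _ | _ | i
  · simp [lam]
  · simp [lam]
  · rw [lam, List.getD_eq_getElem?_getD]
    simp only [List.cons_append, List.getElem?_cons_succ, List.nil_append,
      List.getElem?_append, List.getElem?_replicate, List.length_replicate]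
    split_ifs <;> simp_all <;> omega

theorem getD_nu (i : ℕ) :
    (nu b h t).getD i 0 = if i = 0 then b + h + 1 else if i ≤ t + h + 1 then 1 else 0 := by
  rcases i with _ | i
  · simp [nu]
  · rw [nu, List.getD_eq_getElem?_getD]
    simp only [List.getElem?_cons_succ, List.getElem?_replicate, Nat.add_one_ne_zero, if_false]
    split_ifs <;> simp only [Option.getD_some, Option.getD_none] <;> omega

theorem mem_skewCells {p : ℕ × ℕ} :
    p ∈ skewCells (lam b h t) (nu b h t) ↔
      (p.1 = 0 ∧ b + h + 1 ≤ p.2 ∧ p.2 ≤ b + 2 * h + 1) ∨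
      (p.1 = 1 ∧ 1 ≤ p.2 ∧ p.2 ≤ b + 1) ∨
      (2 ≤ p.1 ∧ p.1 ≤ t + 1 ∧ p.2 = 1) ∨
      (t + h + 2 ≤ p.1 ∧ p.1 ≤ t + 2 * h + 1 ∧ p.2 = 0) := by
  obtain ⟨i, j⟩ := p
  have hlen : (lam b h t).length = t + 2 * h + 2 := by simp [lam]
  simp only [skewCells, cells, Finset.mem_filter, Finset.mem_product, Finset.mem_range,
    getD_lam, getD_nu, hlen]
  split_ifs <;> omega

theorem cellOf_mem {k : ℕ} (hk2 : 2 ≤ k) (hk : k ≤ t + h + 2) :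
    cellOf b h t k ∈ skewCells (lam b h t) (nu b h t) := by
  rw [mem_skewCells, cellOf]
  split_ifs <;> omega

theorem tableau_cellOf {k : ℕ} (hk : 2 ≤ k) : tableau b h t (cellOf b h t k) = k := by
  unfold tableau cellOf
  split_ifs <;> simp_all <;> omega

theorem filter_tableau_eq_of_le {k : ℕ} (hk2 : 2 ≤ k) (hk : k ≤ t + h + 2) :
    (skewCells (lam b h t) (nu b h t)).filter (fun p => tableau b h t p = k) =
      {cellOf b h t k} := by
  ext ⟨i, j⟩
  rw [Finset.mem_filter, mem_skewCells, Finset.mem_singleton, tableau, cellOf]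
  split_ifs <;> simp only [Prod.mk.injEq] <;> omega

theorem filter_tableau_eq_of_lt {k : ℕ} (hk : t + h + 2 < k) :
    (skewCells (lam b h t) (nu b h t)).filter (fun p => tableau b h t p = k) = ∅ := by
  refine Finset.filter_eq_empty_iff.mpr fun p hp => ?_
  rw [mem_skewCells] at hp
  rw [tableau]
  split_ifs <;> omega

theorem filter_tableau_eq_one :
    (skewCells (lam b h t) (nu b h t)).filter (fun p => tableau b h t p = 1) =
      ({0} ×ˢ Finset.Icc (b + h + 1) (b + 2 * h + 1)) ∪ ({1} ×ˢ Finset.Icc 1 b) := by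
  ext ⟨i, j⟩
  rw [Finset.mem_filter, mem_skewCells, tableau]
  simp only [Finset.mem_union, Finset.mem_product, Finset.mem_singleton, Finset.mem_Icc]
  split_ifs <;> omega

theorem card_filter_tableau_eq_one :
    ((skewCells (lam b h t) (nu b h t)).filter (fun p => tableau b h t p = 1)).card =
      b + h + 1 := by
  rw [filter_tableau_eq_one, Finset.card_union_of_disjoint, Finset.card_product,
    Finset.card_product]
  · simp only [Finset.card_singleton, Nat.card_Icc]
    omega
  · exact Finset.disjoint_left.mpr fun ⟨i, j⟩ h₀ h₁ => by
      simp only [Finset.mem_product, Finset.mem_singleton] at h₀ h₁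
      omega

theorem card_filter_tableau_eq (v : ℕ) :
    ((skewCells (lam b h t) (nu b h t)).filter (fun p => tableau b h t p = v + 1)).card =
      (nu b h t).getD v 0 := by
  rw [getD_nu]
  rcases v with _ | v
  · exact card_filter_tableau_eq_one b h t
  by_cases hv : v + 2 ≤ t + h + 2
  · rw [filter_tableau_eq_of_le b h t (by omega) hv, Finset.card_singleton,
      if_neg (by omega), if_pos (by omega)]
  · rw [filter_tableau_eq_of_lt b h t (by omega), Finset.card_empty,
      if_neg (by omega), if_neg (by omega)]

theorem card_filter_tableau_eq_le_one (v : ℕ) :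
    ((skewCells (lam b h t) (nu b h t)).filter (fun p => tableau b h t p = v + 2)).card ≤ 1 :=
  (card_filter_tableau_eq b h t (v + 1)).trans_le <| by
    rw [getD_nu, if_neg (by omega)]
    split <;> omega

theorem exists_earlier_of_tableau_eq {p : ℕ × ℕ} (hp : p ∈ skewCells (lam b h t) (nu b h t))
    {v : ℕ} (hT : tableau b h t p = v + 2) :
    ∃ c ∈ skewCells (lam b h t) (nu b h t), tableau b h t c = v + 1 ∧ c.1 < p.1 := by
  have hmem : p ∈ (skewCells (lam b h t) (nu b h t)).filter
      (fun p => tableau b h t p = v + 2) := Finset.mem_filter.mpr ⟨hp, hT⟩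
  have hv : v + 2 ≤ t + h + 2 := by
    by_contra! hv
    rw [filter_tableau_eq_of_lt b h t hv] at hmem
    exact Finset.notMem_empty p hmem
  rw [filter_tableau_eq_of_le b h t (by omega) hv, Finset.mem_singleton] at hmem
  subst hmem
  rcases v with _ | v
  · exact ⟨(0, b + h + 1), by rw [mem_skewCells]; omega, rfl, by simp [cellOf]⟩
  · refine ⟨cellOf b h t (v + 2), cellOf_mem b h t (by omega) (by omega),
      tableau_cellOf b h t (by omega), ?_⟩
    simp only [cellOf]
    split_ifs <;> omega

theorem isLRTableau : IsLRTableau (lam b h t) (nu b h t) (nu b h t) (tableau b h t) := by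
  refine ⟨fun p hp => ?_, fun i j j' hj hj' hjj' => ?_, fun i i' j hi hi' hii' => ?_,
    card_filter_tableau_eq b h t, fun p _ v => lattice_of_card_le_one_of_exists_earlier
      (card_filter_tableau_eq_le_one b h t) (fun _ hp _ => exists_earlier_of_tableau_eq b h t hp)
      p v⟩
  · rw [mem_skewCells] at hp
    rw [tableau]
    split_ifs <;> omega
  · rw [mem_skewCells] at hj hj'
    simp only [tableau]
    split_ifs <;> omega
  · rw [mem_skewCells] at hi hi'
    simp only [tableau]
    split_ifs <;> omega

end EvenCase

end PaperNote

open PaperNote in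
theorem lr_coefficient_nu_positive_even_case_general
    (q x y : ℕ) (hq : 2 ≤ q) (hx1 : 1 ≤ x)
    (hyx : x - 1 ≤ y) (hyq : y ≤ q - 2) (hs : Even (y - (x - 1))) :
    ∃ T : ℕ × ℕ → ℕ,
      IsLRTableau
        ([q - x + 1, q - y] ++ List.replicate (x - 1) 2 ++ List.replicate (y - (x - 1)) 1)
        ((q - y + (y - (x - 1)) / 2 - 1) :: List.replicate (y - (y - (x - 1)) / 2 + 1) 1)
        ((q - y + (y - (x - 1)) / 2 - 1) :: List.replicate (y - (y - (x - 1)) / 2 + 1) 1) T := by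
  obtain ⟨h, hh⟩ := hs
  obtain ⟨b, hb⟩ : ∃ b, q - y = b + 2 := ⟨q - y - 2, by omega⟩
  have hlam : [q - x + 1, q - y] ++ List.replicate (x - 1) 2 ++ List.replicate (y - (x - 1)) 1 =
      EvenCase.lam b h (x - 1) := by
    rw [EvenCase.lam, show q - x + 1 = b + 2 * h + 2 by omega, hb,
      show y - (x - 1) = 2 * h by omega]
  have hnu : (q - y + (y - (x - 1)) / 2 - 1) :: List.replicate (y - (y - (x - 1)) / 2 + 1) 1 =
      EvenCase.nu b h (x - 1) := by
    rw [EvenCase.nu, show q - y + (y - (x - 1)) / 2 - 1 = b + h + 1 by omega,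
      show y - (y - (x - 1)) / 2 + 1 = x - 1 + h + 1 by omega]
  rw [hlam, hnu]
  exact ⟨_, EvenCase.isLRTableau b h (x - 1)⟩

open PaperNote in
/-- Let `q ≥ 2`, `x ∈ {1,…,q−1}`, `y ∈ {x−1,…,q−2}`, `s = y−(x−1)` even,
`λ = (q−x+1, q−y, 2^{x−1}, 1^s)` and `ν = (q−y+s/2−1, 1^{y−s/2+1})`.  Then the
Littlewood–Richardson coefficient `c^λ_{ν,ν}` is positive. -/
theorem lr_coefficient_nu_positive_even_case
    (q x y : ℕ) (hq : 2 ≤ q) (hx1 : 1 ≤ x) (hxq : x ≤ q - 1)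
    (hyx : x - 1 ≤ y) (hyq : y ≤ q - 2) (hs : Even (y - (x - 1))) :
    ∃ T : ℕ × ℕ → ℕ,
      IsLRTableau
        ([q - x + 1, q - y] ++ List.replicate (x - 1) 2 ++ List.replicate (y - (x - 1)) 1)
        ((q - y + (y - (x - 1)) / 2 - 1) :: List.replicate (y - (y - (x - 1)) / 2 + 1) 1)
        ((q - y + (y - (x - 1)) / 2 - 1) :: List.replicate (y - (y - (x - 1)) / 2 + 1) 1) T :=
  lr_coefficient_nu_positive_even_case_general q x y hq hx1 hyx hyq hs
end

section
/- Let λ = (q, x+1, 1^s) with q = 2^{k-1} ≥ 4, x ≥ 2, s ≥ 1, and λ a partition of 2q. Then Δ²(λ) is not a hook partition of q. -/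
/-!
A hook partition has at most one part `≥ 2`, whereas `Δ²(λ)` has two. The even part `q`
of `λ` contributes `q / 2 ≥ 2`. If `x + 1` is even it contributes `(x + 1) / 2 ≥ 2`; if it is
odd, it is the largest of the `s + 1 ≥ 2` odd parts, so it lies in the raised half and
contributes `x / 2 + 1 ≥ 2`.
-/

namespace PaperNote

def oddHalves (lam : List ℕ) : List ℕ :=
  (lam.filter (fun a => decide (a % 2 = 1))).map (fun a => a / 2)

def evenHalves (lam : List ℕ) : List ℕ :=
  (lam.filter (fun a => decide (a % 2 = 0))).map (fun a => a / 2)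

theorem countP_two_le_of_isHookPartition {l : List ℕ} {n : ℕ} (h : IsHookPartition l n) :
    l.countP (fun a => decide (2 ≤ a)) ≤ 1 := by
  obtain ⟨y, -, rfl⟩ := h
  have hones : (List.replicate y 1).countP (fun a => decide (2 ≤ a)) = 0 := by
    simp [List.countP_eq_zero, List.mem_replicate]
  rw [List.countP_cons, hones]
  split <;> omega

theorem countP_two_le_deltaSq (lam : List ℕ) :
    (deltaSq lam).countP (fun a => decide (2 ≤ a)) =
      (((oddHalves lam).take ((oddHalves lam).length / 2)).map (· + 1)).countP
          (fun a => decide (2 ≤ a)) +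
        ((oddHalves lam).drop ((oddHalves lam).length / 2)).countP (fun a => decide (2 ≤ a)) +
        (evenHalves lam).countP (fun a => decide (2 ≤ a)) := by
  rw [deltaSq, List.countP_filter, (List.perm_insertionSort _ _).countP_eq,
    ← List.countP_append, ← List.countP_append]
  refine List.countP_congr fun a _ => ?_
  simp only [Bool.and_eq_true, decide_eq_true_eq]
  omega

theorem oddHalves_cons (a : ℕ) (l : List ℕ) :
    oddHalves (a :: l) = if a % 2 = 1 then a / 2 :: oddHalves l else oddHalves l := by
  by_cases h : a % 2 = 1 <;> simp [oddHalves, h]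

theorem evenHalves_cons (a : ℕ) (l : List ℕ) :
    evenHalves (a :: l) = if a % 2 = 0 then a / 2 :: evenHalves l else evenHalves l := by
  by_cases h : a % 2 = 0 <;> simp [evenHalves, h]

@[simp] theorem oddHalves_replicate_one (s : ℕ) :
    oddHalves (List.replicate s 1) = List.replicate s 0 := by
  induction s with
  | zero => rfl
  | succ s ih => rw [List.replicate_succ, oddHalves_cons, if_pos rfl, ih]; rfl

@[simp] theorem evenHalves_replicate_one (s : ℕ) : evenHalves (List.replicate s 1) = [] := by
  induction s with
  | zero => rfl
  | succ s ih => rw [List.replicate_succ, evenHalves_cons, if_neg (by decide), ih]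

theorem two_le_countP_deltaSq_cons_cons_replicate_one {q x s : ℕ} (hq : Even q) (hq4 : 4 ≤ q)
    (hx : 2 ≤ x) (hs : 1 ≤ s) :
    2 ≤ (deltaSq (q :: (x + 1) :: List.replicate s 1)).countP (fun a => decide (2 ≤ a)) := by
  have hq2 : q % 2 = 0 := Nat.even_iff.mp hq
  have hq' : 2 ≤ q / 2 := by omega
  rw [countP_two_le_deltaSq]
  rcases Nat.mod_two_eq_zero_or_one x with hx2 | hx2
  · have hx1 : (x + 1) % 2 = 1 := by omega
    have hodd : oddHalves (q :: (x + 1) :: List.replicate s 1) = x / 2 :: List.replicate s 0 := by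
      simp [oddHalves_cons, hq2, hx1]
      omega
    have heven : evenHalves (q :: (x + 1) :: List.replicate s 1) = [q / 2] := by
      simp [evenHalves_cons, hq2, hx1]
    rw [hodd, heven, List.length_cons, List.length_replicate,
      show (s + 1) / 2 = (s + 1) / 2 - 1 + 1 by omega, List.take_succ_cons, List.map_cons,
      List.countP_cons_of_pos (by simp; omega), List.countP_singleton,
      if_pos (decide_eq_true hq')]
    omega
  · have hx1 : (x + 1) % 2 = 0 := by omega
    simp [oddHalves_cons, evenHalves_cons, hq2, hx1, hq', show 2 ≤ (x + 1) / 2 by omega]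

end PaperNote

open PaperNote in
theorem deltaSq_not_hook_general
    (k : ℕ) (hk : 3 ≤ k) (q x s : ℕ) (hq : q = 2 ^ (k - 1))
    (hx : 2 ≤ x) (hs : 1 ≤ s) :
    ¬ IsHookPartition (deltaSq (q :: (x + 1) :: List.replicate s 1)) q := by
  intro hhook
  have hq_even : Even q := hq ▸ Nat.even_pow.mpr ⟨even_two, by omega⟩
  have hq4 : 4 ≤ q := hq ▸ Nat.pow_le_pow_right two_pos (show 2 ≤ k - 1 by omega)
  have hlower := two_le_countP_deltaSq_cons_cons_replicate_one hq_even hq4 hx hs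
  have hupper := countP_two_le_of_isHookPartition hhook
  omega

open PaperNote in
/-- Let `λ = (q, x+1, 1^s)` with `q = 2^{k-1} ≥ 4`, `x ≥ 2`, `s ≥ 1`,
and `λ` a partition of `2q`.  Then `Δ²(λ)` is not a hook partition of `q`. -/
theorem deltaSq_not_hook
    (k : ℕ) (hk : 3 ≤ k) (q x s : ℕ) (hq : q = 2 ^ (k - 1))
    (hx : 2 ≤ x) (hs : 1 ≤ s) (hxq : x + 1 ≤ q)
    (hsum : q + (x + 1) + s = 2 * q) :
    ¬ IsHookPartition (deltaSq (q :: (x + 1) :: List.replicate s 1)) q :=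
  deltaSq_not_hook_general k hk q x s hq hx hs
end
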